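/- Fix an integer r ≥ 1. For every sequence y = (y_n)_{n≥1} with y_n ∈ M_n(ℂ) and sup_n p_n(y_n) < ∞, the sequence (u_{n,r} y_n u_{n,r})_{n≥1} belongs to A. -/

import Mathlib

noncomputable section

set_option maxHeartbeats 1000000

/-- The operator norm on `M_n(ℂ)` acting on `ℓ²(Fin n)`. -/
def opNorm {n : ℕ} (x : Matrix (Fin n) (Fin n) ℂ) : ℝ :=
  ‖LinearMap.toContinuousLinearMap (Matrix.toEuclideanLin x)‖

/-- The diagonal matrix `d_n` whose `k`-th diagonal entry is `c_n ^ k` (for `1 ≤ k ≤ n`). -/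
def dMat (c : ℕ → ℝ) (n : ℕ) : Matrix (Fin n) (Fin n) ℂ :=
  Matrix.diagonal fun k => ((c n ^ ((k : ℕ) + 1) : ℝ) : ℂ)

/-- The inverse `d_n⁻¹`. -/
def dMatInv (c : ℕ → ℝ) (n : ℕ) : Matrix (Fin n) (Fin n) ℂ :=
  Matrix.diagonal fun k => (((c n ^ ((k : ℕ) + 1))⁻¹ : ℝ) : ℂ)

/-- The norm `p_n(x) = max {‖x‖, ‖d_n x d_n⁻¹‖}`. -/
def pnorm (c : ℕ → ℝ) (n : ℕ) (x : Matrix (Fin n) (Fin n) ℂ) : ℝ :=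
  max (opNorm x) (opNorm (dMat c n * x * dMatInv c n))

/-- The left shift `L_n`: `L_n e_{k+1} = e_k`, `L_n e_1 = 0`. -/
def Lmat (n : ℕ) : Matrix (Fin n) (Fin n) ℂ :=
  Matrix.of fun i j => if (i : ℕ) + 1 = (j : ℕ) then 1 else 0

/-- The integer interval `E_{n,k} = {i ∈ ℕ : n/k ≤ i ≤ 2n/k}`. -/
def Eset (n k : ℕ) : Finset ℕ :=
  (Finset.range (2 * n + 1)).filter fun i => (n : ℝ) / k ≤ i ∧ (i : ℝ) ≤ 2 * n / k

/-- `u_{n,k} = μ_{n,k}⁻¹ ∑_{i ∈ E_{n,k}} L_n^i` if `k ≤ n`, and `u_{n,k} = I_n` if `n < k`. -/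
def umat (n k : ℕ) : Matrix (Fin n) (Fin n) ℂ :=
  if k ≤ n then ((Eset n k).card : ℂ)⁻¹ • ∑ i ∈ Eset n k, Lmat n ^ i else 1

/-- Membership in the algebra `A`: `p(T) < ∞` and
`sup_n p_n(T_n u_{n,k} − T_n) + sup_n p_n(u_{n,k} T_n − T_n) → 0` as `k → ∞`. -/
def memA (c : ℕ → ℝ) (T : ∀ n, Matrix (Fin n) (Fin n) ℂ) : Prop :=
  (∃ M : ℝ, ∀ n, pnorm c n (T n) ≤ M) ∧
  ∀ ε : ℝ, 0 < ε → ∃ K : ℕ, ∀ k, K ≤ k → ∀ n,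
    pnorm c n (T n * umat n k - T n) + pnorm c n (umat n k * T n - T n) ≤ ε

/-- `p(T) = sup_n p_n(T_n)`. -/
def pA (c : ℕ → ℝ) (T : ∀ n, Matrix (Fin n) (Fin n) ℂ) : ℝ :=
  ⨆ n, pnorm c n (T n)

/-- The upper triangular part `Δ̄_U x`. -/
def upperT {n : ℕ} (x : Matrix (Fin n) (Fin n) ℂ) : Matrix (Fin n) (Fin n) ℂ :=
  Matrix.of fun i j => if i ≤ j then x i j else 0

/-- The strictly lower triangular part `Δ_L x`. -/
def lowerT {n : ℕ} (x : Matrix (Fin n) (Fin n) ℂ) : Matrix (Fin n) (Fin n) ℂ :=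
  Matrix.of fun i j => if j < i then x i j else 0

open scoped Matrix.Norms.L2Operator

lemma opNorm_eq {n : ℕ} (x : Matrix (Fin n) (Fin n) ℂ) : opNorm x = ‖x‖ := rfl

lemma matrix_norm_one_le {n : ℕ} : ‖(1 : Matrix (Fin n) (Fin n) ℂ)‖ ≤ 1 := by
  rw [Matrix.cstar_norm_def, map_one, ContinuousLinearMap.one_def]
  exact ContinuousLinearMap.norm_id_le

section pn

variable (c : ℕ → ℝ) {n : ℕ}

lemma dMat_mul_dMatInv (hc : c n ≠ 0) : dMat c n * dMatInv c n = 1 := by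
  rw [dMat, dMatInv, Matrix.diagonal_mul_diagonal]
  have h1 : (fun k : Fin n => ((c n ^ ((k : ℕ) + 1) : ℝ) : ℂ) * (((c n ^ ((k : ℕ) + 1))⁻¹ : ℝ) : ℂ))
      = fun _ => (1 : ℂ) := by
    funext k
    rw [← Complex.ofReal_mul, mul_inv_cancel₀ (pow_ne_zero _ hc), Complex.ofReal_one]
  rw [h1, Matrix.diagonal_one]

lemma dMatInv_mul_dMat (hc : c n ≠ 0) : dMatInv c n * dMat c n = 1 := by
  rw [dMat, dMatInv, Matrix.diagonal_mul_diagonal]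
  have h1 : (fun k : Fin n => (((c n ^ ((k : ℕ) + 1))⁻¹ : ℝ) : ℂ) * ((c n ^ ((k : ℕ) + 1) : ℝ) : ℂ))
      = fun _ => (1 : ℂ) := by
    funext k
    rw [← Complex.ofReal_mul, inv_mul_cancel₀ (pow_ne_zero _ hc), Complex.ofReal_one]
  rw [h1, Matrix.diagonal_one]

lemma dconj_mul (hc : c n ≠ 0) (x y : Matrix (Fin n) (Fin n) ℂ) :
    dMat c n * (x * y) * dMatInv c n
      = (dMat c n * x * dMatInv c n) * (dMat c n * y * dMatInv c n) := by
  have h := dMatInv_mul_dMat c hc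
  calc dMat c n * (x * y) * dMatInv c n
      = dMat c n * x * ((dMatInv c n * dMat c n) * (y * dMatInv c n)) := by
        rw [h]; noncomm_ring
    _ = (dMat c n * x * dMatInv c n) * (dMat c n * y * dMatInv c n) := by noncomm_ring

lemma pnorm_nonneg (x : Matrix (Fin n) (Fin n) ℂ) : 0 ≤ pnorm c n x :=
  le_trans (norm_nonneg x) (le_max_left _ _)

lemma norm_le_pnorm (x : Matrix (Fin n) (Fin n) ℂ) : ‖x‖ ≤ pnorm c n x := le_max_left _ _

lemma dconj_norm_le_pnorm (x : Matrix (Fin n) (Fin n) ℂ) :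
    ‖dMat c n * x * dMatInv c n‖ ≤ pnorm c n x := le_max_right _ _

lemma pnorm_mul_le (hc : c n ≠ 0) (x y : Matrix (Fin n) (Fin n) ℂ) :
    pnorm c n (x * y) ≤ pnorm c n x * pnorm c n y := by
  refine max_le ?_ ?_
  · exact le_trans (norm_mul_le x y)
      (mul_le_mul (norm_le_pnorm c x) (norm_le_pnorm c y) (norm_nonneg _) (pnorm_nonneg c x))
  · rw [opNorm_eq, dconj_mul c hc]
    exact le_trans (norm_mul_le _ _)
      (mul_le_mul (dconj_norm_le_pnorm c x) (dconj_norm_le_pnorm c y) (norm_nonneg _)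
        (pnorm_nonneg c x))

lemma pnorm_one_le (hc : c n ≠ 0) : pnorm c n 1 ≤ 1 := by
  refine max_le matrix_norm_one_le ?_
  rw [opNorm_eq, mul_one, dMat_mul_dMatInv c hc]
  exact matrix_norm_one_le

lemma pnorm_zero : pnorm c n 0 = 0 := by
  simp [pnorm, opNorm_eq]

lemma pnorm_smul (a : ℂ) (x : Matrix (Fin n) (Fin n) ℂ) :
    pnorm c n (a • x) = ‖a‖ * pnorm c n x := by
  simp only [pnorm, opNorm_eq, mul_smul_comm, smul_mul_assoc, norm_smul]
  rw [mul_max_of_nonneg _ _ (norm_nonneg a)]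

lemma pnorm_sub_le (x y : Matrix (Fin n) (Fin n) ℂ) :
    pnorm c n (x - y) ≤ pnorm c n x + pnorm c n y := by
  refine max_le ?_ ?_
  · exact le_trans (norm_sub_le x y) (add_le_add (norm_le_pnorm c x) (norm_le_pnorm c y))
  · rw [opNorm_eq, mul_sub, sub_mul]
    exact le_trans (norm_sub_le _ _)
      (add_le_add (dconj_norm_le_pnorm c x) (dconj_norm_le_pnorm c y))

lemma pnorm_sum_le {ι : Type*} (s : Finset ι) (f : ι → Matrix (Fin n) (Fin n) ℂ) :
    pnorm c n (∑ i ∈ s, f i) ≤ ∑ i ∈ s, pnorm c n (f i) := by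
  refine max_le ?_ ?_
  · exact le_trans (norm_sum_le s f) (Finset.sum_le_sum fun i _ => norm_le_pnorm c (f i))
  · rw [opNorm_eq, Finset.mul_sum, Finset.sum_mul]
    exact le_trans (norm_sum_le _ _) (Finset.sum_le_sum fun i _ => dconj_norm_le_pnorm c (f i))

end pn

-- norm_Lmat_le (proved earlier in t6)
lemma norm_Lmat_le (n : ℕ) : ‖Lmat n‖ ≤ 1 := by
  rw [Matrix.l2_opNorm_def]
  refine ContinuousLinearMap.opNorm_le_bound _ zero_le_one fun v => ?_
  rw [one_mul]
  rw [EuclideanSpace.norm_eq, EuclideanSpace.norm_eq]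
  apply Real.sqrt_le_sqrt
  have hA : ∀ i : Fin n,
      ((Matrix.toEuclideanLin ≪≫ₗ LinearMap.toContinuousLinearMap) (Lmat n)) v i
        = ∑ j : Fin n, (if (i : ℕ) + 1 = (j : ℕ) then v j else 0) := by
    intro i
    simp only [LinearEquiv.trans_apply, LinearMap.coe_toContinuousLinearMap',
      Matrix.toEuclideanLin_apply, PiLp.toLp_apply, Matrix.mulVec, dotProduct,
      WithLp.ofLp_toLp, Lmat, Matrix.of_apply, ite_mul, one_mul, zero_mul]
  simp only [hA]
  have key : ∀ i : Fin n, ‖∑ j : Fin n, (if (i : ℕ) + 1 = (j : ℕ) then v j else 0)‖ ^ 2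
      = if h : (i : ℕ) + 1 < n then ‖v ⟨(i : ℕ) + 1, h⟩‖ ^ 2 else 0 := by
    intro i
    split
    · next h =>
      rw [Finset.sum_eq_single_of_mem ⟨(i : ℕ) + 1, h⟩ (Finset.mem_univ _)]
      · simp
      · intro j _ hj
        rw [if_neg fun hc => hj (Fin.ext hc.symm)]
    · next h =>
      have h0 : ∀ j : Fin n, (if (i : ℕ) + 1 = (j : ℕ) then v j else 0) = 0 := by
        intro j
        rw [if_neg]
        intro hc
        have := j.isLt
        omega
      rw [Finset.sum_eq_zero fun j _ => h0 j]
      simp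
  simp only [key]
  have hw0 : ∀ m : ℕ, 0 ≤ (if h : m < n then ‖v ⟨m, h⟩‖ ^ 2 else 0) := by
    intro m; split
    · positivity
    · exact le_rfl
  calc ∑ i : Fin n, (if h : (i : ℕ) + 1 < n then ‖v ⟨(i : ℕ) + 1, h⟩‖ ^ 2 else 0)
      = ∑ m ∈ Finset.range n, (if h : m + 1 < n then ‖v ⟨m + 1, h⟩‖ ^ 2 else 0) := by
        rw [← Fin.sum_univ_eq_sum_range (fun m => if h : m + 1 < n then ‖v ⟨m + 1, h⟩‖ ^ 2 else 0)]
    _ = ∑ m ∈ Finset.Ico 1 (n + 1), (if h : m < n then ‖v ⟨m, h⟩‖ ^ 2 else 0) := by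
        rw [Finset.sum_Ico_eq_sum_range]
        simp only [Nat.add_sub_cancel]
        refine Finset.sum_congr rfl fun x _ => ?_
        rw [add_comm 1 x]
    _ ≤ ∑ m ∈ Finset.range (n + 1), (if h : m < n then ‖v ⟨m, h⟩‖ ^ 2 else 0) := by
        refine Finset.sum_le_sum_of_subset_of_nonneg ?_ fun m _ _ => hw0 m
        intro m hm
        rw [Finset.mem_Ico] at hm
        exact Finset.mem_range.mpr hm.2
    _ = ∑ m ∈ Finset.range n, (if h : m < n then ‖v ⟨m, h⟩‖ ^ 2 else 0) := by
        rw [Finset.sum_range_succ]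
        simp
    _ = ∑ i : Fin n, ‖v i‖ ^ 2 := by
        rw [← Fin.sum_univ_eq_sum_range (fun m => if h : m < n then ‖v ⟨m, h⟩‖ ^ 2 else 0)]
        exact Finset.sum_congr rfl fun i _ => by simp

section pn2
variable (c : ℕ → ℝ) {n : ℕ}

lemma dconj_Lmat (hc : c n ≠ 0) :
    dMat c n * Lmat n * dMatInv c n = (((c n)⁻¹ : ℝ) : ℂ) • Lmat n := by
  ext i j
  rw [dMat, dMatInv, Matrix.mul_diagonal, Matrix.diagonal_mul, Matrix.smul_apply, Lmat,
    Matrix.of_apply]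
  by_cases h : (i : ℕ) + 1 = (j : ℕ)
  · rw [if_pos h, mul_one, smul_eq_mul, mul_one, ← Complex.ofReal_mul]
    have hj : (j : ℕ) + 1 = ((i : ℕ) + 1) + 1 := by omega
    rw [hj, pow_succ (c n) ((i : ℕ) + 1), mul_inv, ← mul_assoc,
      mul_inv_cancel₀ (pow_ne_zero _ hc), one_mul]
  · rw [if_neg h, mul_zero, zero_mul, smul_zero]

lemma pnorm_Lmat_le (hone : 1 < c n) : pnorm c n (Lmat n) ≤ 1 := by
  have hc : c n ≠ 0 := ne_of_gt (lt_trans zero_lt_one hone)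
  refine max_le (norm_Lmat_le n) ?_
  rw [opNorm_eq, dconj_Lmat c hc, norm_smul]
  have h1 : ‖(((c n)⁻¹ : ℝ) : ℂ)‖ ≤ 1 := by
    rw [Complex.norm_real, Real.norm_eq_abs, abs_inv, abs_of_pos (lt_trans zero_lt_one hone)]
    rw [inv_le_one_iff₀]
    right; linarith
  calc ‖(((c n)⁻¹ : ℝ) : ℂ)‖ * ‖Lmat n‖ ≤ 1 * 1 :=
        mul_le_mul h1 (norm_Lmat_le n) (norm_nonneg _) zero_le_one
    _ = 1 := one_mul 1

lemma pnorm_Lpow_le (hone : 1 < c n) (i : ℕ) : pnorm c n (Lmat n ^ i) ≤ 1 := by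
  have hc : c n ≠ 0 := ne_of_gt (lt_trans zero_lt_one hone)
  induction i with
  | zero => rw [pow_zero]; exact pnorm_one_le c hc
  | succ m ih =>
      rw [pow_succ]
      calc pnorm c n (Lmat n ^ m * Lmat n) ≤ pnorm c n (Lmat n ^ m) * pnorm c n (Lmat n) :=
            pnorm_mul_le c hc _ _
        _ ≤ 1 * 1 := mul_le_mul ih (pnorm_Lmat_le c hone) (pnorm_nonneg c _) zero_le_one
        _ = 1 := one_mul 1

end pn2

lemma Eset_eq (n k : ℕ) (hk : 1 ≤ k) :
    Eset n k = Finset.Icc (Nat.ceil ((n : ℝ) / k)) (Nat.floor (2 * (n : ℝ) / k)) := by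
  have hkR : (1 : ℝ) ≤ k := by exact_mod_cast hk
  ext i
  simp only [Eset, Finset.mem_filter, Finset.mem_range, Finset.mem_Icc]
  constructor
  · rintro ⟨hi, h1, h2⟩
    exact ⟨Nat.ceil_le.mpr h1, Nat.le_floor h2⟩
  · rintro ⟨h1, h2⟩
    have hle : ((n : ℝ)) / k ≤ i := le_trans (Nat.le_ceil _) (by exact_mod_cast h1)
    have hle2 : (i : ℝ) ≤ 2 * n / k :=
      le_trans (by exact_mod_cast h2) (Nat.floor_le (by positivity))
    refine ⟨?_, hle, hle2⟩
    have h3 : (i : ℝ) ≤ 2 * n := le_trans hle2 (div_le_self (by positivity) hkR)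
    have h4 : i ≤ 2 * n := by exact_mod_cast h3
    omega

lemma Eset_nonempty_bounds (n k : ℕ) (hk : 1 ≤ k) (hkn : k ≤ n) :
    Nat.ceil ((n : ℝ) / k) ≤ Nat.floor (2 * (n : ℝ) / k) := by
  have hkpos : (0 : ℝ) < k := by exact_mod_cast hk
  have hx : (1 : ℝ) ≤ (n : ℝ) / k := by
    rw [le_div_iff₀ hkpos, one_mul]
    exact_mod_cast hkn
  refine Nat.le_floor ?_
  have h1 : (Nat.ceil ((n : ℝ) / k) : ℝ) < (n : ℝ) / k + 1 :=
    Nat.ceil_lt_add_one (by positivity)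
  have h2 : 2 * (n : ℝ) / k = (n : ℝ) / k + (n : ℝ) / k := by ring
  linarith

section keylemmas

variable (c : ℕ → ℝ)

lemma pnorm_sum_pows_le {n : ℕ} (hone : 1 < c n) (s : Finset ℕ) :
    pnorm c n (∑ i ∈ s, Lmat n ^ i) ≤ s.card := by
  calc pnorm c n (∑ i ∈ s, Lmat n ^ i) ≤ ∑ i ∈ s, pnorm c n (Lmat n ^ i) :=
        pnorm_sum_le c s _
    _ ≤ ∑ _i ∈ s, (1 : ℝ) := Finset.sum_le_sum fun i _ => pnorm_Lpow_le c hone i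
    _ = s.card := by rw [Finset.sum_const, nsmul_eq_mul, mul_one]

lemma pnorm_umat_le {n : ℕ} (hone : 1 < c n) (k : ℕ) : pnorm c n (umat n k) ≤ 1 := by
  have hc : c n ≠ 0 := ne_of_gt (lt_trans zero_lt_one hone)
  rw [umat]
  split
  · rw [pnorm_smul]
    have hnorm : ‖((Eset n k).card : ℂ)⁻¹‖ = ((Eset n k).card : ℝ)⁻¹ := by
      rw [norm_inv, Complex.norm_natCast]
    rw [hnorm]
    rcases Nat.eq_zero_or_pos (Eset n k).card with h0 | hpos
    · rw [h0]
      simp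
    · have hcard : (0 : ℝ) < (Eset n k).card := by exact_mod_cast hpos
      calc ((Eset n k).card : ℝ)⁻¹ * pnorm c n (∑ i ∈ Eset n k, Lmat n ^ i)
          ≤ ((Eset n k).card : ℝ)⁻¹ * (Eset n k).card := by
            refine mul_le_mul_of_nonneg_left (pnorm_sum_pows_le c hone _) ?_
            positivity
        _ = 1 := inv_mul_cancel₀ (ne_of_gt hcard)
  · exact pnorm_one_le c hc

lemma umat_commute (n k l : ℕ) : Commute (umat n k) (umat n l) := by
  rw [umat, umat]
  have hpow : ∀ i j : ℕ, Commute (Lmat n ^ i) (Lmat n ^ j) :=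
    fun i j => (Commute.refl (Lmat n)).pow_pow i j
  split <;> split
  · refine Commute.smul_left (Commute.smul_right ?_ _) _
    exact Commute.sum_left _ _ _ fun i _ => Commute.sum_right _ _ _ fun j _ => hpow i j
  · exact Commute.one_right _
  · exact Commute.one_left _
  · exact Commute.one_right _

end keylemmas

section mainest

variable (c : ℕ → ℝ)

lemma pnorm_shift_le {n : ℕ} (hone : 1 < c n) (a b j : ℕ) :
    pnorm c n ((∑ i ∈ Finset.Icc a b, Lmat n ^ i) * Lmat n ^ j
      - ∑ i ∈ Finset.Icc a b, Lmat n ^ i) ≤ 2 * j := by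
  have hSL : (∑ i ∈ Finset.Icc a b, Lmat n ^ i) * Lmat n ^ j
      = ∑ i ∈ Finset.Icc (a + j) (b + j), Lmat n ^ i := by
    rw [Finset.sum_mul, ← Finset.map_add_right_Icc a b j, Finset.sum_map]
    refine Finset.sum_congr rfl fun i _ => ?_
    rw [addRightEmbedding_apply, pow_add]
  rw [hSL, ← Finset.sum_sdiff_sub_sum_sdiff]
  have h1 : pnorm c n (∑ i ∈ Finset.Icc (a+j) (b+j) \ Finset.Icc a b, Lmat n ^ i) ≤ j := by
    refine le_trans (pnorm_sum_pows_le c hone _) ?_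
    have hsub : Finset.Icc (a+j) (b+j) \ Finset.Icc a b ⊆ Finset.Ico (b+1) (b+1+j) := by
      intro i hi
      simp only [Finset.mem_sdiff, Finset.mem_Icc, Finset.mem_Ico, not_and, not_le] at hi ⊢
      omega
    have hcard := Finset.card_le_card hsub
    have : ((Finset.Icc (a+j) (b+j) \ Finset.Icc a b).card : ℝ)
        ≤ ((Finset.Ico (b+1) (b+1+j)).card : ℝ) := by exact_mod_cast hcard
    refine le_trans this ?_
    rw [Nat.card_Ico]
    simp
  have h2 : pnorm c n (∑ i ∈ Finset.Icc a b \ Finset.Icc (a+j) (b+j), Lmat n ^ i) ≤ j := by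
    refine le_trans (pnorm_sum_pows_le c hone _) ?_
    have hsub : Finset.Icc a b \ Finset.Icc (a+j) (b+j) ⊆ Finset.Ico a (a+j) := by
      intro i hi
      simp only [Finset.mem_sdiff, Finset.mem_Icc, Finset.mem_Ico, not_and, not_le] at hi ⊢
      omega
    have hcard := Finset.card_le_card hsub
    have : ((Finset.Icc a b \ Finset.Icc (a+j) (b+j)).card : ℝ)
        ≤ ((Finset.Ico a (a+j)).card : ℝ) := by exact_mod_cast hcard
    refine le_trans this ?_
    rw [Nat.card_Ico]
    simp
  refine le_trans (pnorm_sub_le c _ _) ?_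
  linarith

lemma pnorm_ur_mul_uk_sub_one (hone : ∀ m, 1 < c m) (r k : ℕ) (hr : 1 ≤ r) (hrk : r ≤ k)
    (n : ℕ) : pnorm c n (umat n r * (umat n k - 1)) ≤ 8 * r / k := by
  have hk1 : 1 ≤ k := le_trans hr hrk
  have hkR : (0 : ℝ) < k := by exact_mod_cast hk1
  have hrR : (0 : ℝ) < r := by exact_mod_cast hr
  by_cases hkn : k ≤ n
  · have hrn : r ≤ n := le_trans hrk hkn
    have hn1 : 1 ≤ n := le_trans hk1 hkn
    have hnR : (0 : ℝ) < n := by exact_mod_cast hn1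
    set a := Nat.ceil ((n : ℝ) / r) with ha_def
    set b := Nat.floor (2 * (n : ℝ) / r) with hb_def
    set a' := Nat.ceil ((n : ℝ) / k) with ha'_def
    set b' := Nat.floor (2 * (n : ℝ) / k) with hb'_def
    have hab : a ≤ b := Eset_nonempty_bounds n r hr hrn
    have hab' : a' ≤ b' := Eset_nonempty_bounds n k hk1 hkn
    set μ := (Finset.Icc a b).card with hμ_def
    set μ' := (Finset.Icc a' b').card with hμ'_def
    have hμpos : 0 < μ := by rw [hμ_def, Nat.card_Icc]; omega
    have hμ'pos : 0 < μ' := by rw [hμ'_def, Nat.card_Icc]; omega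
    have hμRpos : (0 : ℝ) < μ := by exact_mod_cast hμpos
    have hμ'Rpos : (0 : ℝ) < μ' := by exact_mod_cast hμ'pos
    have hμ'0 : (μ' : ℂ) ≠ 0 := by exact_mod_cast Nat.pos_iff_ne_zero.mp hμ'pos
    have hur : umat n r = ((μ : ℂ))⁻¹ • ∑ i ∈ Finset.Icc a b, Lmat n ^ i := by
      rw [umat, if_pos hrn, Eset_eq n r hr]
    have huk : umat n k = ((μ' : ℂ))⁻¹ • ∑ i ∈ Finset.Icc a' b', Lmat n ^ i := by
      rw [umat, if_pos hkn, Eset_eq n k hk1]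
    have hperj : ∀ j : ℕ, pnorm c n (umat n r * Lmat n ^ j - umat n r) ≤ (μ : ℝ)⁻¹ * (2 * j) := by
      intro j
      have hrw : umat n r * Lmat n ^ j - umat n r
          = (μ : ℂ)⁻¹ • ((∑ i ∈ Finset.Icc a b, Lmat n ^ i) * Lmat n ^ j
              - ∑ i ∈ Finset.Icc a b, Lmat n ^ i) := by
        rw [hur, smul_mul_assoc, smul_sub]
      rw [hrw, pnorm_smul, norm_inv, Complex.norm_natCast]
      exact mul_le_mul_of_nonneg_left (pnorm_shift_le c (hone n) a b j) (by positivity)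
    have hexp : umat n r * (umat n k - 1)
        = (μ' : ℂ)⁻¹ • ∑ j ∈ Finset.Icc a' b', (umat n r * Lmat n ^ j - umat n r) := by
      rw [Finset.sum_sub_distrib, ← Finset.mul_sum, Finset.sum_const, smul_sub, mul_sub, mul_one,
        huk, mul_smul_comm]
      congr 1
      rw [← Nat.cast_smul_eq_nsmul ℂ, smul_smul, inv_mul_cancel₀ hμ'0, one_smul]
    have hjb' : ∀ j ∈ Finset.Icc a' b', pnorm c n (umat n r * Lmat n ^ j - umat n r)
        ≤ (μ : ℝ)⁻¹ * (2 * b') := by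
      intro j hj
      rw [Finset.mem_Icc] at hj
      refine le_trans (hperj j) (mul_le_mul_of_nonneg_left ?_ (by positivity))
      have : (j : ℝ) ≤ (b' : ℝ) := by exact_mod_cast hj.2
      linarith
    have hsum : pnorm c n (∑ j ∈ Finset.Icc a' b', (umat n r * Lmat n ^ j - umat n r))
        ≤ (μ' : ℝ) * ((μ : ℝ)⁻¹ * (2 * b')) := by
      refine le_trans (pnorm_sum_le c _ _) ?_
      refine le_trans (Finset.sum_le_sum hjb') ?_
      rw [Finset.sum_const, nsmul_eq_mul]
    have hfinal : pnorm c n (umat n r * (umat n k - 1)) ≤ (μ : ℝ)⁻¹ * (2 * b') := by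
      rw [hexp, pnorm_smul, norm_inv, Complex.norm_natCast]
      calc ((μ' : ℝ))⁻¹ * pnorm c n (∑ j ∈ Finset.Icc a' b', (umat n r * Lmat n ^ j - umat n r))
          ≤ ((μ' : ℝ))⁻¹ * ((μ' : ℝ) * ((μ : ℝ)⁻¹ * (2 * b'))) :=
            mul_le_mul_of_nonneg_left hsum (by positivity)
        _ = (μ : ℝ)⁻¹ * (2 * b') := by
            rw [inv_mul_cancel_left₀ (ne_of_gt hμ'Rpos)]
    refine le_trans hfinal ?_
    -- numeric estimate
    have haR : (a : ℝ) < (n : ℝ) / r + 1 := Nat.ceil_lt_add_one (by positivity)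
    have hbR : 2 * (n : ℝ) / r < (b : ℝ) + 1 := Nat.lt_floor_add_one _
    have hb'R : (b' : ℝ) ≤ 2 * (n : ℝ) / k := Nat.floor_le (by positivity)
    have hμR : (μ : ℝ) = (b : ℝ) + 1 - (a : ℝ) := by
      rw [hμ_def, Nat.card_Icc]
      have : a ≤ b + 1 := le_trans hab (Nat.le_succ b)
      push_cast [this]
      ring
    have hμ1 : (1 : ℝ) ≤ (μ : ℝ) := by exact_mod_cast hμpos
    -- n/r < 2μ
    have hkey : (n : ℝ) / r < 2 * (μ : ℝ) := by
      have h2 : 2 * (n : ℝ) / r = (n : ℝ) / r + (n : ℝ) / r := by ring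
      nlinarith
    have hn2 : (n : ℝ) < 2 * μ * r := by
      rw [div_lt_iff₀ hrR] at hkey
      linarith
    have hb'k : (b' : ℝ) * k ≤ 2 * n := by
      rw [← le_div_iff₀ hkR]
      exact hb'R
    rw [mul_comm, ← div_eq_mul_inv, div_le_div_iff₀ hμRpos hkR]
    nlinarith
  · have h1 : umat n k = 1 := by rw [umat, if_neg hkn]
    rw [h1, sub_self, mul_zero, pnorm_zero]
    positivity

end mainest



/-- Fix an integer `r ≥ 1`. For every sequence `y = (y_n)` with
`y_n ∈ M_n(ℂ)` and `sup_n p_n(y_n) < ∞`, the sequence `(u_{n,r} y_n u_{n,r})_n`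
belongs to `A`. -/
theorem stmt4 (c : ℕ → ℝ) (hmono : StrictMono c) (hone : ∀ n, 1 < c n)
    (hunbdd : ∀ M : ℝ, ∃ n, M < c n) (r : ℕ) (hr : 1 ≤ r)
    (y : ∀ n, Matrix (Fin n) (Fin n) ℂ) (hy : ∃ M : ℝ, ∀ n, pnorm c n (y n) ≤ M) :
    memA c (fun n => umat n r * y n * umat n r) := by
  obtain ⟨M0, hM0⟩ := hy
  set M := max M0 0 with hM_def
  have hM : ∀ n, pnorm c n (y n) ≤ M := fun n => le_trans (hM0 n) (le_max_left _ _)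
  have hMnn : (0 : ℝ) ≤ M := le_max_right _ _
  have hc : ∀ n, c n ≠ 0 := fun n => ne_of_gt (lt_trans zero_lt_one (hone n))
  constructor
  · refine ⟨M, fun n => ?_⟩
    calc pnorm c n (umat n r * y n * umat n r)
        ≤ pnorm c n (umat n r * y n) * pnorm c n (umat n r) := pnorm_mul_le c (hc n) _ _
      _ ≤ (pnorm c n (umat n r) * pnorm c n (y n)) * pnorm c n (umat n r) :=
          mul_le_mul_of_nonneg_right (pnorm_mul_le c (hc n) _ _) (pnorm_nonneg c _)
      _ ≤ (1 * M) * 1 := by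
          refine mul_le_mul ?_ (pnorm_umat_le c (hone n) r) (pnorm_nonneg c _) (by positivity)
          exact mul_le_mul (pnorm_umat_le c (hone n) r) (hM n) (pnorm_nonneg c _) zero_le_one
      _ = M := by ring
  · intro ε hε
    refine ⟨max r (Nat.ceil (16 * M * r / ε) + 1), fun k hk n => ?_⟩
    dsimp only
    have hrk : r ≤ k := le_trans (le_max_left _ _) hk
    have hk1 : 1 ≤ k := le_trans hr hrk
    have hkR : (0 : ℝ) < k := by exact_mod_cast hk1
    have hkey := pnorm_ur_mul_uk_sub_one c hone r k hr hrk n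
    have h8 : (0 : ℝ) ≤ 8 * r / k := by positivity
    have hua : pnorm c n (umat n r * y n) ≤ M := by
      calc pnorm c n (umat n r * y n) ≤ pnorm c n (umat n r) * pnorm c n (y n) :=
            pnorm_mul_le c (hc n) _ _
        _ ≤ 1 * M := mul_le_mul (pnorm_umat_le c (hone n) r) (hM n) (pnorm_nonneg c _) zero_le_one
        _ = M := one_mul M
    have hub : pnorm c n (y n * umat n r) ≤ M := by
      calc pnorm c n (y n * umat n r) ≤ pnorm c n (y n) * pnorm c n (umat n r) :=
            pnorm_mul_le c (hc n) _ _
        _ ≤ M * 1 := mul_le_mul (hM n) (pnorm_umat_le c (hone n) r) (pnorm_nonneg c _) hMnn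
        _ = M := mul_one M
    have e1 : umat n r * y n * umat n r * umat n k - umat n r * y n * umat n r
        = (umat n r * y n) * (umat n r * (umat n k - 1)) := by noncomm_ring
    have hcomm : umat n r * umat n k = umat n k * umat n r := (umat_commute n r k).eq
    have e2 : umat n k * (umat n r * y n * umat n r) - umat n r * y n * umat n r
        = (umat n r * (umat n k - 1)) * (y n * umat n r) := by
      calc umat n k * (umat n r * y n * umat n r) - umat n r * y n * umat n r
          = (umat n k * umat n r) * (y n * umat n r) - umat n r * (y n * umat n r) := by
            noncomm_ring
        _ = (umat n r * umat n k) * (y n * umat n r) - umat n r * (y n * umat n r) := by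
            rw [hcomm]
        _ = (umat n r * (umat n k - 1)) * (y n * umat n r) := by noncomm_ring
    have hb1 : pnorm c n (umat n r * y n * umat n r * umat n k - umat n r * y n * umat n r)
        ≤ M * (8 * r / k) := by
      rw [e1]
      exact le_trans (pnorm_mul_le c (hc n) _ _)
        (mul_le_mul hua hkey (pnorm_nonneg c _) hMnn)
    have hb2 : pnorm c n (umat n k * (umat n r * y n * umat n r) - umat n r * y n * umat n r)
        ≤ (8 * r / k) * M := by
      rw [e2]
      exact le_trans (pnorm_mul_le c (hc n) _ _)
        (mul_le_mul hkey hub (pnorm_nonneg c _) h8)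
    have hKceil : (Nat.ceil (16 * M * r / ε) + 1 : ℕ) ≤ k := le_trans (le_max_right _ _) hk
    have hKk : 16 * M * r / ε < k := by
      have h1 : (16 * M * r / ε : ℝ) ≤ Nat.ceil (16 * M * r / ε) := Nat.le_ceil _
      have h2 : ((Nat.ceil (16 * M * r / ε) + 1 : ℕ) : ℝ) ≤ k := by exact_mod_cast hKceil
      push_cast at h2
      linarith
    have hfin : 16 * M * r / k ≤ ε := by
      rw [div_le_iff₀ hkR]
      rw [div_lt_iff₀ hε] at hKk
      linarith
    have hsum : M * (8 * r / k) + (8 * r / k) * M = 16 * M * r / k := by ring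
    linarith

end
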